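/- arXiv:2111.05238 — 4 statements merged into one kernel-verified Lean document; each statement's English description precedes it below -/
import Mathlib

section
/- Let p be prime and let s, α be integers with s not divisible by p. Suppose for two quadrants (indexed 1 and 2) and a fixed j, the masked values are defined by EN_{ij1} ≡ s(x_i·α + a_1), EN_{ij4} ≡ s(y_i'·α + a_4), EN_{ij5} ≡ s(x_i·y_i'·α + a_5) (mod p) for i = 1, 2, where the same masks a_1, a_4, a_5 are used for both i. Then (EN_{1j1} − EN_{2j1})·y_1' + (EN_{1j4} − EN_{2j4})·x_2 ≡ EN_{1j5} − EN_{2j5} (mod p). -/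
theorem stmt0 (p : ℤ) (hp : Prime p) (s α : ℤ) (hs : ¬ p ∣ s)
    (x₁ y₁' x₂ y₂' a₁ a₄ a₅ : ℤ)
    (EN111 EN114 EN115 EN211 EN214 EN215 : ℤ)
    (h111 : EN111 ≡ s * (x₁ * α + a₁) [ZMOD p])
    (h114 : EN114 ≡ s * (y₁' * α + a₄) [ZMOD p])
    (h115 : EN115 ≡ s * (x₁ * y₁' * α + a₅) [ZMOD p])
    (h211 : EN211 ≡ s * (x₂ * α + a₁) [ZMOD p])
    (h214 : EN214 ≡ s * (y₂' * α + a₄) [ZMOD p])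
    (h215 : EN215 ≡ s * (x₂ * y₂' * α + a₅) [ZMOD p]) :
    (EN111 - EN211) * y₁' + (EN114 - EN214) * x₂ ≡ EN115 - EN215 [ZMOD p] := by
  have h := ((h111.sub h211).mul_right y₁').add ((h114.sub h214).mul_right x₂)
  have h' := h115.sub h215
  calc (EN111 - EN211) * y₁' + (EN114 - EN214) * x₂
      ≡ (s * (x₁ * α + a₁) - s * (x₂ * α + a₁)) * y₁' +
        (s * (y₁' * α + a₄) - s * (y₂' * α + a₄)) * x₂ [ZMOD p] := h
    _ = s * (x₁ * y₁' * α + a₅) - s * (x₂ * y₂' * α + a₅) := by ring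
    _ ≡ EN115 - EN215 [ZMOD p] := h'.symm
end

section
/- Let p be prime, s invertible modulo p, and x_CP, y_CP, x_SV, y_SV, d_1, d_2, d_3, d_4, r_1, r_2, r_3, α integers. Define D_1 = s·(x_CP·α + d_1) mod p, D_2 = s·(y_CP·α + d_2) mod p, D_3 = s·d_3 mod p, D_4 = s·d_4 mod p, and F = r_3·((x_SV·α·D_1 mod p) + (y_SV·α·D_2 mod p) + (r_1·D_3 mod p) + (r_2·D_4 mod p)). Then s⁻¹·F ≡ r_3·(α²·(x_CP·x_SV + y_CP·y_SV) + α·(x_SV·d_1 + y_SV·d_2) + r_1·d_3 + r_2·d_4) (mod p). -/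
theorem stmt8 (p : ℤ) (hp : Prime p) (s sinv : ℤ) (hs : s * sinv ≡ 1 [ZMOD p])
    (xCP yCP xSV ySV d₁ d₂ d₃ d₄ r₁ r₂ r₃ α : ℤ)
    (D₁ D₂ D₃ D₄ F : ℤ)
    (hD₁ : D₁ = s * (xCP * α + d₁) % p)
    (hD₂ : D₂ = s * (yCP * α + d₂) % p)
    (hD₃ : D₃ = s * d₃ % p)
    (hD₄ : D₄ = s * d₄ % p)
    (hF : F = r₃ * ((xSV * α * D₁ % p) + (ySV * α * D₂ % p)
      + (r₁ * D₃ % p) + (r₂ * D₄ % p))) :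
    sinv * F ≡ r₃ * (α ^ 2 * (xCP * xSV + yCP * ySV)
      + α * (xSV * d₁ + ySV * d₂) + r₁ * d₃ + r₂ * d₄) [ZMOD p] := by
  subst hD₁ hD₂ hD₃ hD₄ hF
  have hm : ∀ a : ℤ, a % p ≡ a [ZMOD p] := fun a => Int.emod_emod_of_dvd a dvd_rfl
  have h1 : xSV * α * (s * (xCP * α + d₁) % p) % p ≡ xSV * α * (s * (xCP * α + d₁)) [ZMOD p] :=
    (hm _).trans ((hm _).mul_left _)
  have h2 : ySV * α * (s * (yCP * α + d₂) % p) % p ≡ ySV * α * (s * (yCP * α + d₂)) [ZMOD p] :=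
    (hm _).trans ((hm _).mul_left _)
  have h3 : r₁ * (s * d₃ % p) % p ≡ r₁ * (s * d₃) [ZMOD p] :=
    (hm _).trans ((hm _).mul_left _)
  have h4 : r₂ * (s * d₄ % p) % p ≡ r₂ * (s * d₄) [ZMOD p] :=
    (hm _).trans ((hm _).mul_left _)
  have hstep : sinv * (r₃ * ((xSV * α * (s * (xCP * α + d₁) % p) % p)
      + (ySV * α * (s * (yCP * α + d₂) % p) % p) + (r₁ * (s * d₃ % p) % p)
      + (r₂ * (s * d₄ % p) % p)))
      ≡ sinv * (r₃ * (xSV * α * (s * (xCP * α + d₁)) + ySV * α * (s * (yCP * α + d₂))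
      + r₁ * (s * d₃) + r₂ * (s * d₄))) [ZMOD p] :=
    ((((h1.add h2).add h3).add h4).mul_left r₃).mul_left sinv
  refine hstep.trans ?_
  have key : s * sinv * (r₃ * (α ^ 2 * (xCP * xSV + yCP * ySV)
      + α * (xSV * d₁ + ySV * d₂) + r₁ * d₃ + r₂ * d₄))
      ≡ 1 * (r₃ * (α ^ 2 * (xCP * xSV + yCP * ySV)
      + α * (xSV * d₁ + ySV * d₂) + r₁ * d₃ + r₂ * d₄)) [ZMOD p] := hs.mul_right _
  calc sinv * (r₃ * (xSV * α * (s * (xCP * α + d₁)) + ySV * α * (s * (yCP * α + d₂))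
        + r₁ * (s * d₃) + r₂ * (s * d₄)))
      = s * sinv * (r₃ * (α ^ 2 * (xCP * xSV + yCP * ySV)
        + α * (xSV * d₁ + ySV * d₂) + r₁ * d₃ + r₂ * d₄)) := by ring
    _ ≡ 1 * (r₃ * (α ^ 2 * (xCP * xSV + yCP * ySV)
        + α * (xSV * d₁ + ySV * d₂) + r₁ * d₃ + r₂ * d₄)) [ZMOD p] := key
    _ = r₃ * (α ^ 2 * (xCP * xSV + yCP * ySV)
        + α * (xSV * d₁ + ySV * d₂) + r₁ * d₃ + r₂ * d₄) := one_mul _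
end

section
/- Let p be prime, s a unit modulo p, α an integer, and r, x_V, y_V, M, c integers with r > 0 such that A ≡ s·(r·(M·α² + α·c)) (mod p) and 0 ≤ r·(M·α² + α·c) < p and 0 ≤ r·α·c < α². Then M·r = ((s⁻¹·A mod p) − ((s⁻¹·A mod p) mod α²)) / α², i.e., the server exactly recovers the product r·M from A. -/
theorem stmt18 (p : ℤ) (hp : Prime p) (s sinv : ℤ) (hs : s * sinv ≡ 1 [ZMOD p])
    (α r xV yV M c A : ℤ) (hr : 0 < r)
    (hA : A ≡ s * (r * (M * α ^ 2 + α * c)) [ZMOD p])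
    (hbound : 0 ≤ r * (M * α ^ 2 + α * c) ∧ r * (M * α ^ 2 + α * c) < p)
    (hnoise : 0 ≤ r * α * c ∧ r * α * c < α ^ 2) :
    M * r = ((sinv * A % p) - (sinv * A % p) % α ^ 2) / α ^ 2 := by
  obtain ⟨h0, h1⟩ := hbound
  obtain ⟨h2, h3⟩ := hnoise
  set X := r * (M * α ^ 2 + α * c) with hX
  have hα2 : 0 < α ^ 2 := lt_of_le_of_lt h2 h3
  have hmod : sinv * A ≡ X [ZMOD p] := by
    calc sinv * A ≡ sinv * (s * X) [ZMOD p] := hA.mul_left sinv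
      _ = (s * sinv) * X := by ring
      _ ≡ 1 * X [ZMOD p] := hs.mul_right X
      _ = X := one_mul X
  have hval : sinv * A % p = X := by
    rw [Int.ModEq] at hmod
    rw [hmod, Int.emod_eq_of_lt h0 h1]
  have hXe : X = M * r * α ^ 2 + r * α * c := by rw [hX]; ring
  rw [hval, hXe]
  have : (M * r * α ^ 2 + r * α * c) % α ^ 2 = r * α * c := by
    rw [show M * r * α ^ 2 + r * α * c = r * α * c + M * r * α ^ 2 by ring, Int.add_mul_emod_self_right, Int.emod_eq_of_lt h2 h3]
  rw [this]
  have : M * r * α ^ 2 + r * α * c - r * α * c = M * r * α ^ 2 := by ring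
  rw [this, Int.mul_ediv_cancel _ (ne_of_gt hα2)]
end

section
/- Let p be prime and suppose, in the notation of the quadtree attack, that for quadrants i = 1, 2 and index j the masked values satisfy EN_{ij1} ≡ s(x_i α + a_1), EN_{ij2} ≡ s(y_i α + a_2) (mod p), with shared masks a_1, a_2, unknown unit s·α mod p. Then (EN_{1j2} − EN_{2j2})·(x_1 − x_2) − (EN_{1j1} − EN_{2j1})·(y_1 − y_2) ≡ 0 (mod p). -/
theorem stmt19 (p : ℤ) (hp : Prime p) (s α : ℤ) (hsα : ¬ p ∣ s * α)
    (x₁ y₁ x₂ y₂ a₁ a₂ : ℤ)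
    (EN111 EN112 EN211 EN212 : ℤ)
    (h111 : EN111 ≡ s * (x₁ * α + a₁) [ZMOD p])
    (h112 : EN112 ≡ s * (y₁ * α + a₂) [ZMOD p])
    (h211 : EN211 ≡ s * (x₂ * α + a₁) [ZMOD p])
    (h212 : EN212 ≡ s * (y₂ * α + a₂) [ZMOD p]) :
    (EN112 - EN212) * (x₁ - x₂) - (EN111 - EN211) * (y₁ - y₂) ≡ 0 [ZMOD p] := by
  have h := ((h112.sub h212).mul_right (x₁ - x₂)).sub ((h111.sub h211).mul_right (y₁ - y₂))
  calc (EN112 - EN212) * (x₁ - x₂) - (EN111 - EN211) * (y₁ - y₂)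
      ≡ (s * (y₁ * α + a₂) - s * (y₂ * α + a₂)) * (x₁ - x₂)
        - (s * (x₁ * α + a₁) - s * (x₂ * α + a₁)) * (y₁ - y₂) [ZMOD p] := h
    _ = 0 := by ring
end
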